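/- Let a : ℕ → ℝ with ∑ₙ aₙ² = ∞, let P₋ := ⨂_{n∈ℕ} gaussianReal(0, 1) on Ω = (ℕ → ℝ), let π₀ ∈ (0,1) be a prior, and define the posterior belief process πₙ(ω) := π₀·exp(Sₙ(ω)) / (π₀·exp(Sₙ(ω)) + (1 − π₀)), where Sₙ(ω) := ∑_{i<n} (aᵢ·ωᵢ − aᵢ²/2). Then πₙ → 0 P₋-almost surely. (The Bayesian belief in 'change' converges almost surely to 0 under the true status quo measure: W_b({π^{b̄}_{T_B} = 0}) = 1.) -/

import Mathlib

/-!
Under `P₋` the likelihood ratio `exp Sₙ = ∏_{i<n} exp (aᵢωᵢ - aᵢ²/2)` is a product of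
independent mean-one factors, hence a nonnegative martingale, and converges almost surely to
some `L∞`. The limit vanishes (Kakutani): by Fatou,
`E √L∞ ≤ liminf E √(exp Sₙ) = liminf exp (-∑_{i<n} aᵢ²/8) = 0`.
Since `πₙ` is a continuous function of `exp Sₙ` vanishing at `0`, `πₙ → 0`.
-/

open MeasureTheory ProbabilityTheory Filter Finset Topology

namespace MeasureTheory

theorem Measure.eq_infinitePi_of_map_fin {X : Type*} [MeasurableSpace X] {μ : Measure X}
    [IsProbabilityMeasure μ] {P : Measure (ℕ → X)}
    (hP : ∀ n, P.map (fun ω (i : Fin n) => ω i) = Measure.pi fun _ => μ) :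
    P = infinitePi fun _ => μ := by
  classical
  refine eq_infinitePi _ fun s t ht => ?_
  obtain ⟨n, hsn⟩ := s.exists_nat_subset_range
  have hcyl : Set.pi ↑s t = (fun ω (i : Fin n) => ω i) ⁻¹'
      Set.univ.pi fun i : Fin n => if (i : ℕ) ∈ s then t i else Set.univ := by
    ext ω
    simp only [Set.mem_pi, Finset.mem_coe, Set.mem_preimage, Set.mem_univ, true_implies]
    refine ⟨fun h i => ?_, fun h i hi => ?_⟩
    · split_ifs with hi
      exacts [h i hi, trivial]
    · simpa [hi] using h ⟨i, mem_range.mp (hsn hi)⟩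
  have hbox :
      MeasurableSet (Set.univ.pi fun i : Fin n => if (i : ℕ) ∈ s then t i else Set.univ) :=
    .univ_pi fun i => by split_ifs; exacts [ht _, .univ]
  rw [hcyl, ← Measure.map_apply (μ := P) (by fun_prop) hbox, hP, pi_pi,
    Fin.prod_univ_eq_prod_range (fun i => μ (if i ∈ s then t i else Set.univ)) n]
  simp only [apply_ite μ, measure_univ, prod_ite_mem, Finset.inter_eq_right.mpr hsn]

variable {Ω : Type*} {mΩ : MeasurableSpace Ω} {μ : Measure Ω}

theorem ae_eq_zero_of_ae_tendsto_of_tendsto_integral {f : ℕ → Ω → ℝ} {g : Ω → ℝ}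
    (hf_nonneg : ∀ n ω, 0 ≤ f n ω) (hf_int : ∀ n, Integrable (f n) μ)
    (hlim : ∀ᵐ ω ∂μ, Tendsto (fun n => f n ω) atTop (𝓝 (g ω)))
    (hint : Tendsto (fun n => ∫ ω, f n ω ∂μ) atTop (𝓝 0)) :
    g =ᵐ[μ] 0 := by
  have hg_meas : AEMeasurable g μ :=
    aemeasurable_of_tendsto_metrizable_ae' (fun n => (hf_int n).aemeasurable) hlim
  have hfatou : ∫⁻ ω, ENNReal.ofReal (g ω) ∂μ = 0 := by
    refine le_antisymm ?_ zero_le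
    calc ∫⁻ ω, ENNReal.ofReal (g ω) ∂μ
        = ∫⁻ ω, liminf (fun n => ENNReal.ofReal (f n ω)) atTop ∂μ := by
          refine lintegral_congr_ae ?_
          filter_upwards [hlim] with ω hω
          exact ((ENNReal.continuous_ofReal.tendsto _).comp hω).liminf_eq.symm
      _ ≤ liminf (fun n => ∫⁻ ω, ENNReal.ofReal (f n ω) ∂μ) atTop :=
          lintegral_liminf_le' fun n => (hf_int n).aemeasurable.ennreal_ofReal
      _ = 0 := by
          simp_rw [← ofReal_integral_eq_lintegral_ofReal (hf_int _)
            (Eventually.of_forall (hf_nonneg _))]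
          rw [(ENNReal.tendsto_ofReal hint).liminf_eq, ENNReal.ofReal_zero]
  filter_upwards [(lintegral_eq_zero_iff' hg_meas.ennreal_ofReal).mp hfatou, hlim] with ω h0 hω
  exact le_antisymm (ENNReal.ofReal_eq_zero.mp h0) (ge_of_tendsto' hω (hf_nonneg · ω))

theorem Integrable.sqrt [IsFiniteMeasure μ] {f : Ω → ℝ} (hf : Integrable f μ) :
    Integrable (fun ω => √(f ω)) μ := by
  have hdom : Integrable (fun ω => 1 + ‖f ω‖) μ := (integrable_const 1).add hf.norm
  refine hdom.mono' (Real.continuous_sqrt.comp_aestronglyMeasurable hf.1) ?_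
  refine Eventually.of_forall fun ω => ?_
  rw [Real.norm_of_nonneg (Real.sqrt_nonneg _), Real.sqrt_le_iff]
  exact ⟨by positivity, by nlinarith [norm_nonneg (f ω), Real.le_norm_self (f ω)]⟩

variable [IsFiniteMeasure μ] {ℱ : Filtration ℕ mΩ} {M : ℕ → Ω → ℝ}

theorem Martingale.integral_eq_integral_zero (hM : Martingale M ℱ μ) (n : ℕ) :
    ∫ ω, M n ω ∂μ = ∫ ω, M 0 ω ∂μ := by
  rw [← integral_condExp (ℱ.le 0)]
  exact integral_congr_ae (hM.condExp_ae_eq n.zero_le)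

theorem Martingale.ae_tendsto_zero_of_tendsto_integral_sqrt (hM : Martingale M ℱ μ)
    (hM_nonneg : ∀ n ω, 0 ≤ M n ω)
    (hsqrt : Tendsto (fun n => ∫ ω, √(M n ω) ∂μ) atTop (𝓝 0)) :
    ∀ᵐ ω ∂μ, Tendsto (fun n => M n ω) atTop (𝓝 0) := by
  have hbdd : ∀ n, eLpNorm (M n) 1 μ ≤ (∫ ω, M 0 ω ∂μ).toNNReal := fun n => by
    change _ ≤ ENNReal.ofReal _
    rw [eLpNorm_one_eq_lintegral_enorm, ← hM.integral_eq_integral_zero n,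
      ofReal_integral_eq_lintegral_ofReal (hM.integrable n)
        (Eventually.of_forall (hM_nonneg n))]
    exact (lintegral_congr fun ω => Real.enorm_of_nonneg (hM_nonneg n ω)).le
  have hlim := hM.submartingale.ae_tendsto_limitProcess hbdd
  have hsqrt_lim : (fun ω => √(ℱ.limitProcess M μ ω)) =ᵐ[μ] 0 :=
    ae_eq_zero_of_ae_tendsto_of_tendsto_integral (fun n ω => Real.sqrt_nonneg _)
      (fun n => (hM.integrable n).sqrt)
      (by filter_upwards [hlim] with ω hω using (Real.continuous_sqrt.tendsto _).comp hω) hsqrt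
  filter_upwards [hlim, hsqrt_lim] with ω hω hω0
  have hZ : ℱ.limitProcess M μ ω = 0 :=
    le_antisymm (Real.sqrt_eq_zero'.mp hω0) (ge_of_tendsto' hω (hM_nonneg · ω))
  rwa [hZ] at hω

end MeasureTheory

namespace ProbabilityTheory

section Gaussian

variable {Ω : Type*} {mΩ : MeasurableSpace Ω} {P : Measure Ω} {X : Ω → ℝ} {m : ℝ} {v : NNReal}

theorem integrable_exp_mul_add_of_map_eq_gaussianReal (hX : P.map X = gaussianReal m v)
    (c d : ℝ) : Integrable (fun ω => Real.exp (c * X ω + d)) P := by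
  have : NeZero P := ⟨fun h => by
    rw [h, Measure.map_zero] at hX
    exact IsProbabilityMeasure.ne_zero _ hX.symm⟩
  simp_rw [Real.exp_add]
  exact (mgf_pos_iff.mp (mgf_gaussianReal hX c ▸ Real.exp_pos _)).mul_const _

theorem integral_exp_mul_add_of_map_eq_gaussianReal (hX : P.map X = gaussianReal m v)
    (c d : ℝ) :
    ∫ ω, Real.exp (c * X ω + d) ∂P = Real.exp (m * c + v * c ^ 2 / 2 + d) := by
  simp_rw [Real.exp_add _ d, integral_mul_const]
  rw [← mgf, mgf_gaussianReal hX]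

end Gaussian

section IndepProduct

variable {Ω : Type*} {mΩ : MeasurableSpace Ω} {μ : Measure Ω} {Y : ℕ → Ω → ℝ}

theorem iIndepFun.integrable_prod_range (hind : iIndepFun Y μ) (hmeas : ∀ i, Measurable (Y i))
    (hint : ∀ i, Integrable (Y i) μ) (n : ℕ) : Integrable (∏ i ∈ range n, Y i) μ := by
  have := hind.isProbabilityMeasure
  induction n with
  | zero => exact integrable_const (1 : ℝ)
  | succ n ih =>
    rw [prod_range_succ]
    exact (hind.indepFun_prod_range_succ hmeas n).integrable_mul ih (hint n)

theorem iIndepFun.integral_prod_range (hind : iIndepFun Y μ) (hmeas : ∀ i, Measurable (Y i))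
    (n : ℕ) : ∫ ω, (∏ i ∈ range n, Y i) ω ∂μ = ∏ i ∈ range n, ∫ ω, Y i ω ∂μ := by
  have := hind.isProbabilityMeasure
  induction n with
  | zero => simp
  | succ n ih =>
    rw [prod_range_succ, prod_range_succ, ← ih]
    exact (hind.indepFun_prod_range_succ hmeas n).integral_mul_eq_mul_integral
      (Finset.aestronglyMeasurable_prod _ fun i _ => (hmeas i).aestronglyMeasurable)
      (hmeas n).aestronglyMeasurable

/-- The product runs up to `n` inclusive because `Filtration.natural Y _ n` already
contains `Y n`. -/
theorem iIndepFun.martingale_prod_range_succ (hind : iIndepFun Y μ)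
    (hmeas : ∀ i, StronglyMeasurable (Y i)) (hint : ∀ i, Integrable (Y i) μ)
    (hmean : ∀ i, ∫ ω, Y i ω ∂μ = 1) :
    Martingale (fun n => ∏ i ∈ range (n + 1), Y i) (Filtration.natural Y hmeas) μ := by
  have := hind.isProbabilityMeasure
  have hmeas' : ∀ i, Measurable (Y i) := fun i => (hmeas i).measurable
  have hadapted : StronglyAdapted (Filtration.natural Y hmeas)
      fun n => ∏ i ∈ range (n + 1), Y i := fun n =>
    Finset.stronglyMeasurable_prod _ fun i hi =>
      (Filtration.stronglyAdapted_natural hmeas i).mono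
        (Filtration.mono _ (Nat.lt_succ_iff.mp (mem_range.mp hi)))
  refine martingale_nat hadapted (hind.integrable_prod_range hmeas' hint <| · + 1) fun n => ?_
  have hcond : μ[Y (n + 1) | Filtration.natural Y hmeas n] =ᵐ[μ] fun _ => 1 :=
    hmean (n + 1) ▸ hind.condExp_natural_ae_eq_of_lt hmeas n.lt_succ_self
  refine EventuallyEq.symm ?_
  calc μ[∏ i ∈ range (n + 1 + 1), Y i | Filtration.natural Y hmeas n]
      = μ[(∏ i ∈ range (n + 1), Y i) * Y (n + 1) | Filtration.natural Y hmeas n] := by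
        rw [prod_range_succ]
    _ =ᵐ[μ] (∏ i ∈ range (n + 1), Y i) * μ[Y (n + 1) | Filtration.natural Y hmeas n] :=
        condExp_mul_of_stronglyMeasurable_left (hadapted n)
          (prod_range_succ Y (n + 1) ▸ hind.integrable_prod_range hmeas' hint (n + 2)) (hint _)
    _ =ᵐ[μ] ∏ i ∈ range (n + 1), Y i := by
        filter_upwards [hcond] with ω hω
        simp [hω]

theorem iIndepFun.ae_tendsto_prod_range_zero (hind : iIndepFun Y μ)
    (hmeas : ∀ i, Measurable (Y i)) (hnonneg : ∀ i ω, 0 ≤ Y i ω)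
    (hint : ∀ i, Integrable (Y i) μ) (hmean : ∀ i, ∫ ω, Y i ω ∂μ = 1)
    (hsqrt : Tendsto (fun n => ∏ i ∈ range n, ∫ ω, √(Y i ω) ∂μ) atTop (𝓝 0)) :
    ∀ᵐ ω ∂μ, Tendsto (fun n => ∏ i ∈ range n, Y i ω) atTop (𝓝 0) := by
  have := hind.isProbabilityMeasure
  have hM := hind.martingale_prod_range_succ (fun i => (hmeas i).stronglyMeasurable) hint hmean
  have hind_sqrt : iIndepFun (fun i ω => √(Y i ω)) μ :=
    hind.comp (fun _ => Real.sqrt) fun _ => Real.continuous_sqrt.measurable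
  have hsqrt_M : Tendsto (fun n => ∫ ω, √((∏ i ∈ range (n + 1), Y i) ω) ∂μ) atTop (𝓝 0) := by
    refine ((tendsto_add_atTop_iff_nat 1).mpr hsqrt).congr fun n => ?_
    rw [← hind_sqrt.integral_prod_range (fun i => (hmeas i).sqrt)]
    simp only [Finset.prod_apply]
    exact integral_congr_ae (Eventually.of_forall fun ω =>
      (Real.sqrt_prod _ fun i _ => hnonneg i ω).symm)
  have hlim := hM.ae_tendsto_zero_of_tendsto_integral_sqrt
    (fun n ω => by simpa only [Finset.prod_apply] using prod_nonneg fun i _ => hnonneg i ω)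
    hsqrt_M
  filter_upwards [hlim] with ω hω
  exact (tendsto_add_atTop_iff_nat 1).mp (by simpa only [Finset.prod_apply] using hω)

end IndepProduct

end ProbabilityTheory

theorem ae_tendsto_likelihoodRatio_zero_of_not_summable_sq {a : ℕ → ℝ}
    (hdiv : ¬ Summable fun n => a n ^ 2) :
    ∀ᵐ ω ∂(Measure.infinitePi fun _ => gaussianReal 0 1),
      Tendsto (fun n => Real.exp (∑ i ∈ range n, (a i * ω i - a i ^ 2 / 2))) atTop (𝓝 0) := by
  set μ := Measure.infinitePi fun _ : ℕ => gaussianReal 0 1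
  have hlaw (i : ℕ) : μ.map (fun ω => ω i) = gaussianReal 0 1 := Measure.infinitePi_map_eval _ i
  set Y : ℕ → (ℕ → ℝ) → ℝ := fun i ω => Real.exp (a i * ω i + -(a i ^ 2 / 2))
  have hind : iIndepFun Y μ :=
    iIndepFun_infinitePi (X := fun i x => Real.exp (a i * x + -(a i ^ 2 / 2))) fun i => by fun_prop
  have hmean (i : ℕ) : ∫ ω, Y i ω ∂μ = 1 := by
    rw [integral_exp_mul_add_of_map_eq_gaussianReal (hlaw i)]
    simp
  have hsqrt (i : ℕ) : ∫ ω, √(Y i ω) ∂μ = Real.exp (-(a i ^ 2) / 8) := by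
    simp_rw [Y, ← Real.exp_half, add_div, mul_div_right_comm (a i)]
    rw [integral_exp_mul_add_of_map_eq_gaussianReal (hlaw i)]
    congr 1
    push_cast
    ring
  have hv : Tendsto (fun n => ∑ i ∈ range n, a i ^ 2) atTop atTop :=
    (not_summable_iff_tendsto_nat_atTop_of_nonneg fun n => sq_nonneg (a n)).mp hdiv
  have hprod : Tendsto (fun n => ∏ i ∈ range n, ∫ ω, √(Y i ω) ∂μ) atTop (𝓝 0) := by
    simp_rw [hsqrt, ← Real.exp_sum, ← Finset.sum_div, Finset.sum_neg_distrib]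
    exact Real.tendsto_exp_atBot.comp
      (tendsto_neg_atTop_atBot.comp hv |>.atBot_div_const (by norm_num))
  filter_upwards [hind.ae_tendsto_prod_range_zero (fun i => by fun_prop)
    (fun i ω => (Real.exp_pos _).le)
    (fun i => integrable_exp_mul_add_of_map_eq_gaussianReal (hlaw i) _ _) hmean hprod] with ω hω
  simpa only [Real.exp_sum, sub_eq_add_neg] using hω

theorem posterior_tendsto_zero_of_resolution_general (a : ℕ → ℝ)
    (hdiv : ¬ Summable (fun n => (a n)^2))
    (Pm : Measure (ℕ → ℝ))
    (hPm : ∀ n : ℕ, Measure.map (fun ω (i : Fin n) => ω i) Pm =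
      Measure.pi fun _ : Fin n => gaussianReal 0 1)
    (π0 : ℝ) (hπ0 : π0 ∈ Set.Ioo (0:ℝ) 1)
    (S : ℕ → (ℕ → ℝ) → ℝ)
    (hS : ∀ n ω, S n ω = ∑ i ∈ Finset.range n, (a i * ω i - (a i)^2 / 2))
    (π : ℕ → (ℕ → ℝ) → ℝ)
    (hπ : ∀ n ω, π n ω =
      π0 * Real.exp (S n ω) / (π0 * Real.exp (S n ω) + (1 - π0))) :
    ∀ᵐ ω ∂Pm, Tendsto (fun n => π n ω) atTop (nhds 0) := by
  rw [Measure.eq_infinitePi_of_map_fin hPm]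
  filter_upwards [ae_tendsto_likelihoodRatio_zero_of_not_summable_sq hdiv] with ω hω
  have hodds := (hω.const_mul π0).div ((hω.const_mul π0).add_const (1 - π0))
    (by simpa using sub_ne_zero.mpr hπ0.2.ne')
  simp only [mul_zero, zero_div] at hodds
  simp only [hπ, hS]
  exact hodds

/-- Posterior belief in 'change' vanishes under the true status quo measure: if
`∑ aₙ² = ∞`, `P₋ = ⨂ N(0,1)` on `ℕ → ℝ` (characterized by its finite-dimensional
marginals), `π₀ ∈ (0,1)`, and `πₙ = π₀ e^{Sₙ}/(π₀ e^{Sₙ} + 1 − π₀)` with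
`Sₙ(ω) = ∑_{i<n} (aᵢωᵢ − aᵢ²/2)`, then `πₙ → 0` `P₋`-almost surely. -/
theorem posterior_tendsto_zero_of_resolution (a : ℕ → ℝ)
    (hdiv : ¬ Summable (fun n => (a n)^2))
    (Pm : Measure (ℕ → ℝ)) [IsProbabilityMeasure Pm]
    (hPm : ∀ n : ℕ, Measure.map (fun ω (i : Fin n) => ω i) Pm =
      Measure.pi fun _ : Fin n => gaussianReal 0 1)
    (π0 : ℝ) (hπ0 : π0 ∈ Set.Ioo (0:ℝ) 1)
    (S : ℕ → (ℕ → ℝ) → ℝ)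
    (hS : ∀ n ω, S n ω = ∑ i ∈ Finset.range n, (a i * ω i - (a i)^2 / 2))
    (π : ℕ → (ℕ → ℝ) → ℝ)
    (hπ : ∀ n ω, π n ω =
      π0 * Real.exp (S n ω) / (π0 * Real.exp (S n ω) + (1 - π0))) :
    ∀ᵐ ω ∂Pm, Tendsto (fun n => π n ω) atTop (nhds 0) :=
  posterior_tendsto_zero_of_resolution_general a hdiv Pm hPm π0 hπ0 S hS π hπ
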